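/- arXiv:1211.3975 — 2 statements merged into one kernel-verified Lean document; each statement's English description precedes it below -/
import Mathlib

section
/- Let Γ = (E, V, ∂) be a hypergraph and let s ⊆ E be a cyclic set of edges. Then the cycles contained in s are pairwise independent, and s is their disjoint union. -/
/-! Hypergraph notions.  A hypergraph `Γ = (E, V, ∂)` is given by types `E` (edges),
`V` (vertices) and a boundary map `bd : E → Set V` with `bd e ≠ ∅` for all `e`.
A vertex `v` is incident to an edge `e` if `v ∈ bd e`. -/

variable {E V : Type*}

/-- A set `s ⊆ E` is cyclic if it is finite and every vertex is incident to exactly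
two or to zero edges of `s`. -/
def IsCyclicSet (bd : E → Set V) (s : Set E) : Prop :=
  s.Finite ∧ ∀ v : V, {e ∈ s | v ∈ bd e}.ncard = 2 ∨ {e ∈ s | v ∈ bd e} = ∅

/-- A cycle is a minimal nonempty cyclic set: a nonempty cyclic set containing no
smaller nonempty cyclic set. -/
def IsCycle (bd : E → Set V) (s : Set E) : Prop :=
  IsCyclicSet bd s ∧ s.Nonempty ∧
    ∀ t ⊆ s, IsCyclicSet bd t → t.Nonempty → t = s

/-- Two sets of edges are independent if no vertex is incident both to an edge of the
first and to an edge of the second, i.e. `(⋃_{e∈s} ∂e) ∩ (⋃_{e∈t} ∂e) = ∅`. -/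
def Indep (bd : E → Set V) (s t : Set E) : Prop :=
  ∀ v : V, ¬ ((∃ e ∈ s, v ∈ bd e) ∧ (∃ e ∈ t, v ∈ bd e))

/-!
Inside a cyclic set `s`, a cyclic subset `t` meeting a vertex `v` must contain both edges of `s`
at `v`. Hence the difference `t \ u` of two cyclic subsets of `s` is again cyclic: at each vertex
it has either all edges of `t` or none. Two cycles in `s` sharing a vertex thus share an edge, so
one minus the other is a proper cyclic subset, hence empty, and minimality makes them equal. An
edge `e ∈ s` lies in a cycle: a minimal cyclic subset `t ⊆ s` containing `e` is a cycle, since a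
nonempty proper cyclic `u ⊂ t` would leave `e` in `u` or in `t \ u`.
-/

namespace IsCyclicSet

variable {bd : E → Set V} {s t u : Set E}

theorem mem_of_incident (hs : IsCyclicSet bd s) (ht : IsCyclicSet bd t) (hts : t ⊆ s)
    {v : V} (hv : ∃ e ∈ t, v ∈ bd e) {e : E} (hes : e ∈ s) (hev : v ∈ bd e) : e ∈ t := by
  have hsub : {e ∈ t | v ∈ bd e} ⊆ {e ∈ s | v ∈ bd e} := fun e he => ⟨hts he.1, he.2⟩
  have hne : {e ∈ t | v ∈ bd e}.Nonempty := hv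
  have ht2 : {e ∈ t | v ∈ bd e}.ncard = 2 := (ht.2 v).resolve_right hne.ne_empty
  have hs2 : {e ∈ s | v ∈ bd e}.ncard = 2 := (hs.2 v).resolve_right (hne.mono hsub).ne_empty
  have heq := Set.eq_of_subset_of_ncard_le hsub (by omega) (hs.1.subset fun e he => he.1)
  exact (heq.symm.subset ⟨hes, hev⟩).1

theorem diff (hs : IsCyclicSet bd s) (ht : IsCyclicSet bd t) (hu : IsCyclicSet bd u)
    (hts : t ⊆ s) (hus : u ⊆ s) : IsCyclicSet bd (t \ u) := by
  refine ⟨ht.1.sdiff, fun v => ?_⟩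
  by_cases hv : ∃ e ∈ u, v ∈ bd e
  · right
    exact Set.eq_empty_of_forall_notMem fun e ⟨⟨het, heu⟩, hev⟩ =>
      heu (hs.mem_of_incident hu hus hv (hts het) hev)
  · push Not at hv
    have heq : {e ∈ t \ u | v ∈ bd e} = {e ∈ t | v ∈ bd e} :=
      Set.ext fun e => ⟨fun he => ⟨he.1.1, he.2⟩, fun he => ⟨⟨he.1, fun heu => hv e heu he.2⟩, he.2⟩⟩
    rw [heq]
    exact ht.2 v

theorem exists_cycle_mem (hs : IsCyclicSet bd s) {e : E} (he : e ∈ s) :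
    ∃ c ⊆ s, IsCycle bd c ∧ e ∈ c := by
  obtain ⟨t, ⟨hts, ht, het⟩, hmin⟩ :=
    (hs.1.finite_subsets.subset fun t (ht : t ⊆ s ∧ IsCyclicSet bd t ∧ e ∈ t) => ht.1).exists_minimal
      ⟨s, subset_rfl, hs, he⟩
  refine ⟨t, hts, ⟨ht, ⟨e, het⟩, fun w hwt hw hwne => ?_⟩, het⟩
  by_cases hew : e ∈ w
  · exact hwt.antisymm (hmin ⟨hwt.trans hts, hw, hew⟩ hwt)
  · have hdiff : t ⊆ t \ w :=
      hmin ⟨Set.sdiff_subset.trans hts, ht.diff ht hw subset_rfl hwt, het, hew⟩ Set.sdiff_subset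
    obtain ⟨x, hxw⟩ := hwne
    exact absurd hxw (hdiff (hwt hxw)).2

end IsCyclicSet

theorem IsCycle.indep_of_ne {bd : E → Set V} {s c c' : Set E} (hs : IsCyclicSet bd s)
    (hc : IsCycle bd c) (hc' : IsCycle bd c') (hcs : c ⊆ s) (hc's : c' ⊆ s) (hne : c ≠ c') :
    Indep bd c c' := by
  rintro v ⟨⟨e, hec, hev⟩, hv'⟩
  have hec' : e ∈ c' := hs.mem_of_incident hc'.1 hc's hv' (hcs hec) hev
  have hcc' : c ⊆ c' := by
    by_contra h
    have hdiff := hc.2.2 _ Set.sdiff_subset (hs.diff hc.1 hc'.1 hcs hc's) (Set.sdiff_nonempty.mpr h)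
    exact (hdiff.symm ▸ hec : e ∈ c \ c').2 hec'
  exact hne (hc'.2.2 c hcc' hc.1 hc.2.1)

theorem cyclicSet_eq_disjoint_union_of_cycles_general (bd : E → Set V)
    (s : Set E) (hs : IsCyclicSet bd s) :
    {c : Set E | IsCycle bd c ∧ c ⊆ s}.Pairwise (Indep bd) ∧
    ⋃₀ {c : Set E | IsCycle bd c ∧ c ⊆ s} = s := by
  refine ⟨fun c ⟨hc, hcs⟩ c' ⟨hc', hc's⟩ hne => hc.indep_of_ne hs hc' hcs hc's hne, ?_⟩
  refine (Set.sUnion_subset fun c hc => hc.2).antisymm fun e he => ?_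
  obtain ⟨c, hcs, hc, hec⟩ := hs.exists_cycle_mem he
  exact ⟨c, ⟨hc, hcs⟩, hec⟩

/-- in a hypergraph, the cycles contained in a cyclic set of edges `s`
are pairwise independent, and `s` is their (disjoint) union. -/
theorem cyclicSet_eq_disjoint_union_of_cycles (bd : E → Set V)
    (hbd : ∀ e, (bd e).Nonempty) (s : Set E) (hs : IsCyclicSet bd s) :
    {c : Set E | IsCycle bd c ∧ c ⊆ s}.Pairwise (Indep bd) ∧
    ⋃₀ {c : Set E | IsCycle bd c ∧ c ⊆ s} = s :=
  cyclicSet_eq_disjoint_union_of_cycles_general bd s hs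
end

section
/- Let Γ = (E, V, ∂) be a hypergraph and let s ⊆ E be a cycle admitting a partition s = s′ ⊔ s″ into two subsets such that any two distinct edges in the same subset have disjoint boundaries (so s is an even cycle with halves s′, s″). Then this partition is unique as an unordered pair {s′, s″}, and ⋃_{e∈s′} ∂e = ⋃_{e∈s″} ∂e. -/
/-! Hypergraph notions.  A hypergraph `Γ = (E, V, ∂)` is given by types `E` (edges),
`V` (vertices) and a boundary map `bd : E → Set V` with `bd e ≠ ∅` for all `e`.
A vertex `v` is incident to an edge `e` if `v ∈ bd e`. -/

variable {E V : Type*}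

/-- `s'` is a half-set: any two distinct edges in it have disjoint boundaries. -/
def IsHalfSet (bd : E → Set V) (t : Set E) : Prop :=
  ∀ e ∈ t, ∀ f ∈ t, e ≠ f → Disjoint (bd e) (bd f)

/-- `s' , s''` form a partition of `s` into two halves. -/
def AreHalves (bd : E → Set V) (s s' s'' : Set E) : Prop :=
  s' ∪ s'' = s ∧ Disjoint s' s'' ∧ IsHalfSet bd s' ∧ IsHalfSet bd s''

-- auxiliary lemmas

def Adj (bd : E → Set V) (s : Set E) (a b : E) : Prop :=
  a ∈ s ∧ b ∈ s ∧ ∃ v, v ∈ bd a ∧ v ∈ bd b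

lemma other_edge {bd : E → Set V} {s : Set E} (hs : IsCyclicSet bd s)
    {e : E} (he : e ∈ s) {v : V} (hv : v ∈ bd e) :
    ∃ f ∈ s, f ≠ e ∧ v ∈ bd f ∧ ∀ g ∈ s, v ∈ bd g → g = e ∨ g = f := by
  rcases hs.2 v with h2 | h0
  · rcases Set.ncard_eq_two.mp h2 with ⟨a, b, hab, hset⟩
    have hmem : ∀ g, g ∈ s ∧ v ∈ bd g ↔ g = a ∨ g = b := by
      intro g
      constructor
      · intro hg
        have : g ∈ ({a, b} : Set E) := hset ▸ hg
        simpa using this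
      · intro hg
        have : g ∈ ({a, b} : Set E) := by simpa using hg
        exact (hset ▸ this : g ∈ {e ∈ s | v ∈ bd e})
    have ha : a ∈ s ∧ v ∈ bd a := (hmem a).mpr (Or.inl rfl)
    have hb : b ∈ s ∧ v ∈ bd b := (hmem b).mpr (Or.inr rfl)
    rcases (hmem e).mp ⟨he, hv⟩ with rfl | rfl
    · exact ⟨b, hb.1, fun hh => hab hh.symm, hb.2, fun g hg hgv => (hmem g).mp ⟨hg, hgv⟩⟩
    · exact ⟨a, ha.1, fun hh => hab hh, ha.2,
        fun g hg hgv => ((hmem g).mp ⟨hg, hgv⟩).symm⟩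
  · exact absurd (show e ∈ {e ∈ s | v ∈ bd e} from ⟨he, hv⟩) (by simp [h0])

lemma cycle_connected {bd : E → Set V} {s : Set E} (hs : IsCycle bd s)
    {e0 : E} (he0 : e0 ∈ s) : ∀ f ∈ s, Relation.ReflTransGen (Adj bd s) e0 f := by
  set u := {f | f ∈ s ∧ Relation.ReflTransGen (Adj bd s) e0 f} with hu
  have husub : u ⊆ s := fun f hf => hf.1
  have hcyc : IsCyclicSet bd u := by
    refine ⟨hs.1.1.subset husub, fun v => ?_⟩
    rcases hs.1.2 v with h2 | h0
    · by_cases hne : {e ∈ u | v ∈ bd e} = ∅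
      · exact Or.inr hne
      · left
        obtain ⟨e, heu, hev⟩ := Set.nonempty_iff_ne_empty.mpr hne
        have hsets : {f ∈ u | v ∈ bd f} = {f ∈ s | v ∈ bd f} := by
          apply Set.Subset.antisymm
          · exact fun f hf => ⟨husub hf.1, hf.2⟩
          · intro f hf
            exact ⟨⟨hf.1, heu.2.trans (Relation.ReflTransGen.single
              ⟨husub heu, hf.1, v, hev, hf.2⟩)⟩, hf.2⟩
        rw [hsets]; exact h2
    · right
      apply Set.eq_empty_iff_forall_notMem.mpr
      intro f hf
      exact absurd (show f ∈ {e ∈ s | v ∈ bd e} from ⟨husub hf.1, hf.2⟩) (by simp [h0])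
  have huniv : u = s := hs.2.2 u husub hcyc ⟨e0, he0, Relation.ReflTransGen.refl⟩
  intro f hf
  exact ((huniv ▸ hf : f ∈ u)).2

lemma areHalves_swap {bd : E → Set V} {s s' s'' : Set E} (h : AreHalves bd s s' s'') :
    AreHalves bd s s'' s' :=
  ⟨Set.union_comm s'' s' ▸ h.1, h.2.1.symm, h.2.2.2, h.2.2.1⟩

lemma half_flip {bd : E → Set V} {s s' s'' : Set E} (h : AreHalves bd s s' s'')
    {a b : E} (ha : a ∈ s) (hb : b ∈ s) (hab : a ≠ b)
    {v : V} (hva : v ∈ bd a) (hvb : v ∈ bd b) : (b ∈ s' ↔ a ∉ s') := by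
  obtain ⟨huni, hdis, h1, h2⟩ := h
  have ha' : a ∈ s' ∪ s'' := huni ▸ ha
  have hb' : b ∈ s' ∪ s'' := huni ▸ hb
  constructor
  · intro hbs' has'
    exact Set.disjoint_left.mp (h1 a has' b hbs' hab) hva hvb
  · intro has'
    have has'' : a ∈ s'' := ha'.resolve_left has'
    rcases hb' with hbs' | hbs''
    · exact hbs'
    · exact absurd (Set.disjoint_left.mp (h2 a has'' b hbs'' hab) hva hvb) id

lemma halves_iff {bd : E → Set V} {s s' s'' t' t'' : Set E}
    (h : AreHalves bd s s' s'') (h2 : AreHalves bd s t' t'')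
    {e0 f : E} (hr : Relation.ReflTransGen (Adj bd s) e0 f)
    (base : e0 ∈ s' ↔ e0 ∈ t') : f ∈ s' ↔ f ∈ t' := by
  induction hr with
  | refl => exact base
  | @tail b c _ hbc ih =>
    obtain ⟨hb, hc, v, hvb, hvc⟩ := hbc
    by_cases hbceq : b = c
    · exact hbceq ▸ ih
    · have hf1 := half_flip h hb hc hbceq hvb hvc
      have hf2 := half_flip h2 hb hc hbceq hvb hvc
      rw [hf1, hf2, ih]

lemma compl_half {bd : E → Set V} {s s' s'' : Set E} (h : AreHalves bd s s' s'') :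
    s'' = s \ s' := by
  obtain ⟨huni, hdis, -, -⟩ := h
  ext f
  constructor
  · intro hf
    exact ⟨huni ▸ Or.inr hf, fun hf' => Set.disjoint_left.mp hdis hf' hf⟩
  · intro hf
    exact (huni ▸ hf.1 : f ∈ s' ∪ s'').resolve_left hf.2

lemma halves_eq {bd : E → Set V} {s : Set E} (hs : IsCycle bd s)
    {s' s'' t' t'' : Set E} (h : AreHalves bd s s' s'') (h2 : AreHalves bd s t' t'')
    {e0 : E} (he0 : e0 ∈ s) (base : e0 ∈ s' ↔ e0 ∈ t') : t' = s' ∧ t'' = s'' := by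
  have ht'eq : t' = s' := by
    ext f
    constructor
    · intro hf
      have hfs : f ∈ s := h2.1 ▸ Or.inl hf
      exact (halves_iff h h2 (cycle_connected hs he0 f hfs) base).mpr hf
    · intro hf
      have hfs : f ∈ s := h.1 ▸ Or.inl hf
      exact (halves_iff h h2 (cycle_connected hs he0 f hfs) base).mp hf
  exact ⟨ht'eq, by rw [compl_half h2, compl_half h, ht'eq]⟩

lemma half_union_subset {bd : E → Set V} {s s' s'' : Set E} (hs : IsCycle bd s)
    (h : AreHalves bd s s' s'') : (⋃ e ∈ s', bd e) ⊆ ⋃ e ∈ s'', bd e := by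
  intro v hv
  simp only [Set.mem_iUnion, exists_prop] at hv ⊢
  obtain ⟨e, hes', hv⟩ := hv
  have hes : e ∈ s := h.1 ▸ Or.inl hes'
  obtain ⟨f, hfs, hfe, hvf, -⟩ := other_edge hs.1 hes hv
  have : f ∈ s' ∪ s'' := h.1 ▸ hfs
  rcases this with hfs' | hfs''
  · exact absurd (Set.disjoint_left.mp (h.2.2.1 e hes' f hfs' (Ne.symm hfe)) hv hvf) id
  · exact ⟨f, hfs'', hvf⟩

/-- if a cycle `s` in a hypergraph admits a partition into two halves
`s′, s″`, then this partition is unique as an unordered pair, and the union of the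
boundaries of the edges of `s′` equals the union of the boundaries of the edges
of `s″`. -/
theorem evenCycle_halves_unique (bd : E → Set V) (hbd : ∀ e, (bd e).Nonempty)
    (s : Set E) (hs : IsCycle bd s) (s' s'' : Set E) (h : AreHalves bd s s' s'') :
    (∀ t' t'' : Set E, AreHalves bd s t' t'' →
      (t' = s' ∧ t'' = s'') ∨ (t' = s'' ∧ t'' = s')) ∧
    (⋃ e ∈ s', bd e) = ⋃ e ∈ s'', bd e := by
  obtain ⟨e0, he0⟩ := hs.2.1
  constructor
  · intro t' t'' h2
    have he0s : e0 ∈ s' ∪ s'' := h.1 ▸ he0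
    have he0t : e0 ∈ t' ∪ t'' := h2.1 ▸ he0
    rcases he0s with hS | hS <;> rcases he0t with hT | hT
    · exact Or.inl (halves_eq hs h h2 he0 (iff_of_true hS hT))
    · have := halves_eq hs h (areHalves_swap h2) he0 (iff_of_true hS hT)
      exact Or.inr ⟨this.2, this.1⟩
    · exact Or.inr (halves_eq hs (areHalves_swap h) h2 he0 (iff_of_true hS hT))
    · have hS' : e0 ∉ s' := fun hx => Set.disjoint_left.mp h.2.1 hx hS
      have hT' : e0 ∉ t' := fun hx => Set.disjoint_left.mp h2.2.1 hx hT
      exact Or.inl (halves_eq hs h h2 he0 (iff_of_false hS' hT'))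
  · exact Set.Subset.antisymm (half_union_subset hs h)
      (half_union_subset hs (areHalves_swap h))
end
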